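/- arXiv:math/0406286 — 5 statements merged into one kernel-verified Lean document; each statement's English description precedes it below -/
import Mathlib

section
/- Let A be a commutative integral domain and B a Noetherian commutative A-algebra such that the structure map f : A → B is injective and every ideal I of A satisfies IB ∩ A = I (for instance, if f is pure). Then there exists a minimal prime ideal P of B such that the preimage of P in A is the zero ideal. -/
/-- Let `A` be a commutative integral domain and `B` a Noetherian commutative `A`-algebra such
that the structure map `A → B` is injective and every ideal `I` of `A` satisfies `IB ∩ A = I`.
Then there exists a minimal prime `P` of `B` whose preimage in `A` is the zero ideal. -/
theorem exists_minimalPrime_comap_eq_bot {A B : Type u} [CommRing A] [IsDomain A] [CommRing B]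
    [Algebra A B] [IsNoetherianRing B]
    (hinj : Function.Injective (algebraMap A B))
    (hcontr : ∀ I : Ideal A, (I.map (algebraMap A B)).comap (algebraMap A B) = I) :
    ∃ P ∈ minimalPrimes B, P.comap (algebraMap A B) = ⊥ := by
  have hntB : Nontrivial B := by
    refine ⟨algebraMap A B 0, algebraMap A B 1, fun h => ?_⟩
    exact zero_ne_one (hinj h)
  by_contra hcon
  push_neg at hcon
  -- choose a nonzero element in each comap
  have hfin : (minimalPrimes B).Finite := minimalPrimes.finite_of_isNoetherianRing B
  have hchoice : ∀ P ∈ minimalPrimes B, ∃ a : A, a ∈ P.comap (algebraMap A B) ∧ a ≠ 0 := by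
    intro P hP
    have := hcon P hP
    rcases Submodule.exists_mem_ne_zero_of_ne_bot this with ⟨a, ha, ha0⟩
    exact ⟨a, ha, ha0⟩
  choose a ha ha0 using hchoice
  set s := hfin.toFinset with hs
  have hmem : ∀ P ∈ s, P ∈ minimalPrimes B := fun P hP => hfin.mem_toFinset.mp hP
  -- the product of the chosen elements
  let x : A := ∏ P ∈ s.attach, a P (hmem P P.2)
  have hx0 : x ≠ 0 := by
    apply Finset.prod_ne_zero_iff.mpr
    intro P _
    exact ha0 P (hmem P P.2)
  -- f x lies in every minimal prime
  have hxin : algebraMap A B x ∈ sInf (minimalPrimes B) := by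
    rw [Ideal.mem_sInf]
    intro P hP
    have hPs : (⟨P, hfin.mem_toFinset.mpr hP⟩ : {y // y ∈ s}) ∈ s.attach := Finset.mem_attach _ _
    have : algebraMap A B x = ∏ Q ∈ s.attach, algebraMap A B (a Q (hmem Q Q.2)) := by
      simp [x, map_prod]
    rw [this]
    have hPprime : P.IsPrime := hP.1.1
    exact Ideal.IsPrime.prod_mem_iff.mpr ⟨⟨P, hfin.mem_toFinset.mpr hP⟩, hPs,
      ha P hP⟩
  have hrad : sInf (minimalPrimes B) = (⊥ : Ideal B).radical := by
    rw [minimalPrimes, Ideal.sInf_minimalPrimes]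
  rw [hrad, Ideal.mem_radical_iff] at hxin
  obtain ⟨n, hn⟩ := hxin
  rw [← map_pow] at hn
  have : x ^ n = 0 := hinj (by simpa using hn)
  exact hx0 ((pow_eq_zero_iff'.mp this).1)
end

section
/- Let A be a commutative ring and B a Noetherian commutative A-algebra such that every ideal J of A satisfies JB ∩ A = J. Then for every prime ideal P of A there exists a prime ideal Q of B, minimal among primes containing PB, whose preimage in A equals P. In particular the induced map Spec B → Spec A is surjective. -/
/-- Let `A` be a commutative ring and `B` a Noetherian commutative `A`-algebra such that every
ideal `J` of `A` satisfies `JB ∩ A = J`. Then for every prime ideal `P` of `A` there is a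
prime `Q` of `B`, minimal among primes containing `PB`, whose preimage in `A` equals `P`.
In particular, `Spec B → Spec A` is surjective. -/
theorem exists_minimalPrime_over_comap_eq {A B : Type u} [CommRing A] [CommRing B]
    [Algebra A B] [IsNoetherianRing B]
    (hcontr : ∀ J : Ideal A, (J.map (algebraMap A B)).comap (algebraMap A B) = J) :
    (∀ P : Ideal A, P.IsPrime →
        ∃ Q ∈ (P.map (algebraMap A B)).minimalPrimes, Q.comap (algebraMap A B) = P) ∧
      Function.Surjective (PrimeSpectrum.comap (algebraMap A B)) := by
  have key : ∀ P : Ideal A, P.IsPrime →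
      ∃ Q ∈ (P.map (algebraMap A B)).minimalPrimes, Q.comap (algebraMap A B) = P := by
    intro P hP
    set f := algebraMap A B
    set I := P.map f with hI
    -- the set of minimal primes over I is finite
    have hfin : I.minimalPrimes.Finite := by
      rw [Ideal.minimalPrimes_eq_comap]
      exact ((minimalPrimes.finite_of_isNoetherianRing (B ⧸ I)).image _)
    -- comap of the radical of I is P
    have hrad : (I.radical).comap f = P := by
      rw [Ideal.comap_radical, hcontr, hP.radical]
    -- sInf of minimal primes is the radical
    have hsInf : sInf I.minimalPrimes = I.radical := Ideal.sInf_minimalPrimes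
    -- so the finset inf of comaps is ≤ P
    have hle : (hfin.toFinset.inf fun Q => Q.comap f) ≤ P := by
      rw [← hrad, ← hsInf]
      intro x hx
      simp only [Ideal.mem_comap, Ideal.mem_sInf]
      intro Q hQ
      have := Finset.inf_le (f := fun Q : Ideal B => Q.comap f)
        (hfin.mem_toFinset.mpr hQ)
      exact this hx
    obtain ⟨Q, hQmem, hQle⟩ := hP.inf_le'.mp hle
    rw [hfin.mem_toFinset] at hQmem
    refine ⟨Q, hQmem, le_antisymm hQle ?_⟩
    have hIQ : I ≤ Q := hQmem.1.2
    calc P = I.comap f := (hcontr P).symm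
      _ ≤ Q.comap f := Ideal.comap_mono hIQ
  refine ⟨key, fun p => ?_⟩
  obtain ⟨Q, hQmem, hQeq⟩ := key p.asIdeal p.isPrime
  exact ⟨⟨Q, hQmem.1.1⟩, PrimeSpectrum.ext hQeq⟩
end

section
/- Let A be a commutative ring, B a commutative A-algebra whose structure map A → B is pure, and I an ideal of A. Let R_A(I) = A[tI] ⊆ A[t] be the Rees algebra of I and R_B(BI) = B[t·IB] ⊆ B[t] the Rees algebra of the extended ideal IB, with the natural (degree-preserving) homomorphism R_A(I) → R_B(BI) induced by A → B. Then every homogeneous ideal J of R_A(I) is contracted from R_B(BI): the preimage in R_A(I) of the ideal of R_B(BI) generated by the image of J equals J. Concretely, if J = ⊕_{n≥0} J_n t^n with J_n ⊆ I^n, then J·R_B(BI) = ⊕_{n≥0} (J_n B) t^n and J·R_B(BI) ∩ R_A(I) = J. -/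
open Polynomial
open scoped TensorProduct

/-- The natural degree-preserving homomorphism `R_A(I) = A[tI] → R_B(IB) = B[t·IB]` between
Rees algebras induced by the structure map `A → B`, given by mapping coefficients. -/
noncomputable def reesAlgebraMap {A B : Type u} [CommRing A] [CommRing B] [Algebra A B] (I : Ideal A) :
    reesAlgebra I →+* reesAlgebra (I.map (algebraMap A B)) :=
  RingHom.codRestrict
    ((Polynomial.mapRingHom (algebraMap A B)).comp (reesAlgebra I).val.toRingHom)
    (reesAlgebra (I.map (algebraMap A B)))
    (fun p => by
      rw [mem_reesAlgebra_iff]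
      intro i
      simp only [RingHom.comp_apply, coe_mapRingHom, AlgHom.toRingHom_eq_coe,
        RingHom.coe_coe, Subalgebra.coe_val, Polynomial.coeff_map]
      rw [← Ideal.map_pow]
      exact Ideal.mem_map_of_mem _ ((mem_reesAlgebra_iff I (p : A[X])).1 p.2 i))

/-- An ideal `J` of the Rees algebra `R_A(I) ⊆ A[t]` is homogeneous if for every `p ∈ J` each
homogeneous component `(coeff n p) tⁿ` of `p` again lies in `J`. -/
def IsHomogeneousReesIdeal {A : Type u} [CommRing A] (I : Ideal A)
    (J : Ideal (reesAlgebra I)) : Prop :=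
  ∀ p ∈ J, ∀ n : ℕ,
    (⟨Polynomial.monomial n ((p : A[X]).coeff n),
      reesAlgebra.monomial_mem.2 ((mem_reesAlgebra_iff I (p : A[X])).1 p.2 n)⟩ :
        reesAlgebra I) ∈ J

section Aux

variable {A B : Type u} [CommRing A] [CommRing B] [Algebra A B]

/-- The degree `n` piece of an ideal `J` of the Rees algebra, as an ideal of `A`. -/
def reesDeg (I : Ideal A) (J : Ideal (reesAlgebra I)) (n : ℕ) : Ideal A where
  carrier := {a | ∃ h : a ∈ I ^ n,
    (⟨Polynomial.monomial n a, reesAlgebra.monomial_mem.2 h⟩ : reesAlgebra I) ∈ J}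
  zero_mem' := ⟨zero_mem _, by
    have : (⟨Polynomial.monomial n (0 : A),
        reesAlgebra.monomial_mem.2 (zero_mem _)⟩ : reesAlgebra I) = 0 :=
      Subtype.ext (by simp)
    rw [this]; exact J.zero_mem⟩
  add_mem' := by
    rintro a b ⟨ha, hA⟩ ⟨hb, hB⟩
    refine ⟨add_mem ha hb, ?_⟩
    have : (⟨Polynomial.monomial n (a + b),
        reesAlgebra.monomial_mem.2 (add_mem ha hb)⟩ : reesAlgebra I) =
        ⟨Polynomial.monomial n a, reesAlgebra.monomial_mem.2 ha⟩ +
        ⟨Polynomial.monomial n b, reesAlgebra.monomial_mem.2 hb⟩ :=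
      Subtype.ext (by simp)
    rw [this]; exact J.add_mem hA hB
  smul_mem' := by
    rintro c a ⟨ha, hA⟩
    have hc : Polynomial.monomial 0 c ∈ reesAlgebra I :=
      reesAlgebra.monomial_mem.2 (by simp)
    refine ⟨Ideal.mul_mem_left _ c ha, ?_⟩
    have : (⟨Polynomial.monomial n (c • a),
        reesAlgebra.monomial_mem.2 (Ideal.mul_mem_left _ c ha)⟩ : reesAlgebra I) =
        (⟨Polynomial.monomial 0 c, hc⟩ : reesAlgebra I) *
        ⟨Polynomial.monomial n a, reesAlgebra.monomial_mem.2 ha⟩ :=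
      Subtype.ext (by
        simp [Polynomial.monomial_mul_monomial, smul_eq_mul])
    rw [this]; exact J.mul_mem_left _ hA

theorem reesDeg_mem_Ipow (I : Ideal A) (J : Ideal (reesAlgebra I)) (n : ℕ) {a : A}
    (h : a ∈ reesDeg I J n) : a ∈ I ^ n := h.1

theorem pow_mul_reesDeg_le (I : Ideal A) (J : Ideal (reesAlgebra I)) (k m : ℕ) :
    I ^ k * reesDeg I J m ≤ reesDeg I J (k + m) := by
  rw [Ideal.mul_le]
  rintro r hr s ⟨hs, hsJ⟩
  have hmem : r * s ∈ I ^ (k + m) := by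
    rw [pow_add]; exact Ideal.mul_mem_mul hr hs
  refine ⟨hmem, ?_⟩
  have : (⟨Polynomial.monomial (k + m) (r * s),
      reesAlgebra.monomial_mem.2 hmem⟩ : reesAlgebra I) =
      (⟨Polynomial.monomial k r, reesAlgebra.monomial_mem.2 hr⟩ : reesAlgebra I) *
      ⟨Polynomial.monomial m s, reesAlgebra.monomial_mem.2 hs⟩ :=
    Subtype.ext (by simp [Polynomial.monomial_mul_monomial])
  rw [this]; exact J.mul_mem_left _ hsJ

/-- Purity implies that every ideal of `A` is contracted from `B`. -/
theorem pure_ideal_contraction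
    (hpure : ∀ (M : Type u) [AddCommGroup M] [Module A M],
      Function.Injective (fun m : M => (m ⊗ₜ[A] (1 : B) : M ⊗[A] B)))
    (N : Ideal A) {a : A} (h : algebraMap A B a ∈ N.map (algebraMap A B)) : a ∈ N := by
  set φ := algebraMap A B
  set M := A ⧸ N
  set e : M := Ideal.Quotient.mk N 1
  -- every element of the extended ideal tensors to zero against `e`
  have key : ∀ b ∈ N.map φ, (e ⊗ₜ[A] b : M ⊗[A] B) = 0 := by
    intro b hb
    have hb' : b ∈ Submodule.span B (φ '' (N : Set A)) := hb
    obtain ⟨n, f, g, hfg⟩ := Submodule.mem_span_set'.1 hb'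
    have : (e ⊗ₜ[A] b : M ⊗[A] B) = ∑ i : Fin n, (e ⊗ₜ[A] (f i • (g i : B))) := by
      rw [← hfg, TensorProduct.tmul_sum]
    rw [this]
    refine Finset.sum_eq_zero fun i _ => ?_
    obtain ⟨x, hx, hgx⟩ := (g i).2
    have hsmul : f i • (g i : B) = x • f i := by
      rw [smul_eq_mul, Algebra.smul_def, ← hgx, mul_comm]
    rw [hsmul, ← TensorProduct.smul_tmul]
    have : x • e = 0 := by
      have hxe : x • e = Ideal.Quotient.mk N x := by
        simp [e, Algebra.smul_def, ← Ideal.Quotient.algebraMap_eq]; rfl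
      rw [hxe, Ideal.Quotient.eq_zero_iff_mem]; exact hx
    rw [this, TensorProduct.zero_tmul]
  have h1 : ((Ideal.Quotient.mk N a : M) ⊗ₜ[A] (1 : B) : M ⊗[A] B) = 0 := by
    have h2 : (Ideal.Quotient.mk N a : M) = a • e := by
      simp [e, Algebra.smul_def, ← Ideal.Quotient.algebraMap_eq]; rfl
    rw [h2, TensorProduct.smul_tmul]
    have : a • (1 : B) = φ a := by rw [Algebra.smul_def, mul_one]
    rw [this]
    exact key _ h
  have h2 : (Ideal.Quotient.mk N a : M) = 0 := by
    apply hpure M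
    show (Ideal.Quotient.mk N a : M) ⊗ₜ[A] (1 : B) = (0 : M) ⊗ₜ[A] (1 : B)
    rw [TensorProduct.zero_tmul]; exact h1
  rwa [Ideal.Quotient.eq_zero_iff_mem] at h2

/-- The ideal of polynomials in the target Rees algebra all of whose coefficients lie in the
extensions of the graded pieces of `J`. -/
def coeffIdeal (I : Ideal A) (J : Ideal (reesAlgebra I)) :
    Ideal (reesAlgebra (I.map (algebraMap A B))) where
  carrier := {q | ∀ n : ℕ, (q : B[X]).coeff n ∈ (reesDeg I J n).map (algebraMap A B)}
  zero_mem' := fun n => by simp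
  add_mem' := by
    intro q r hq hr n
    have : ((q + r : reesAlgebra (I.map (algebraMap A B))) : B[X]).coeff n =
        (q : B[X]).coeff n + (r : B[X]).coeff n := by
      push_cast; rw [Polynomial.coeff_add]
    rw [this]; exact add_mem (hq n) (hr n)
  smul_mem' := by
    intro r q hq n
    rw [smul_eq_mul]
    have hval : ((r * q : reesAlgebra (I.map (algebraMap A B))) : B[X]) =
        (r : B[X]) * (q : B[X]) := by push_cast; ring
    have hco : ((r * q : reesAlgebra (I.map (algebraMap A B))) : B[X]).coeff n =
        ∑ x ∈ Finset.HasAntidiagonal.antidiagonal n, (r : B[X]).coeff x.1 * (q : B[X]).coeff x.2 := by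
      rw [hval, Polynomial.coeff_mul]
    rw [hco]
    refine Ideal.sum_mem _ fun x hx => ?_
    have h1 : (r : B[X]).coeff x.1 ∈ (I ^ x.1).map (algebraMap A B) := by
      rw [Ideal.map_pow]
      exact (mem_reesAlgebra_iff _ (r : B[X])).1 r.2 x.1
    have h2 : (q : B[X]).coeff x.2 ∈ (reesDeg I J x.2).map (algebraMap A B) := hq x.2
    have h3 : (r : B[X]).coeff x.1 * (q : B[X]).coeff x.2 ∈
        ((I ^ x.1 * reesDeg I J x.2).map (algebraMap A B)) := by
      rw [Ideal.map_mul]; exact Ideal.mul_mem_mul h1 h2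
    have h4 : ((I ^ x.1 * reesDeg I J x.2).map (algebraMap A B)) ≤
        (reesDeg I J n).map (algebraMap A B) := by
      refine Ideal.map_mono ?_
      have h5 := pow_mul_reesDeg_le I J x.1 x.2
      rwa [Finset.HasAntidiagonal.mem_antidiagonal.1 hx] at h5
    exact h4 h3

theorem mem_coeffIdeal {I : Ideal A} {J : Ideal (reesAlgebra I)}
    {q : reesAlgebra (I.map (algebraMap A B))} :
    q ∈ coeffIdeal (B := B) I J ↔
      ∀ n : ℕ, (q : B[X]).coeff n ∈ (reesDeg I J n).map (algebraMap A B) :=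
  Iff.rfl

end Aux

/-- Let `A → B` be a pure map of commutative rings and `I` an ideal of `A`. Then every
homogeneous ideal `J` of the Rees algebra `R_A(I)` is contracted from `R_B(IB)` along the
natural map `R_A(I) → R_B(IB)`: the preimage of the ideal generated by the image of `J`
equals `J`. -/
theorem rees_homogeneous_ideal_contracted {A B : Type u} [CommRing A] [CommRing B]
    [Algebra A B]
    (hpure : ∀ (M : Type u) [AddCommGroup M] [Module A M],
      Function.Injective (fun m : M => (m ⊗ₜ[A] (1 : B) : M ⊗[A] B)))
    (I : Ideal A) (J : Ideal (reesAlgebra I)) (hJ : IsHomogeneousReesIdeal I J) :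
    (J.map (reesAlgebraMap (B := B) I)).comap (reesAlgebraMap (B := B) I) = J := by
  set φ := algebraMap A B
  -- The ideal of "coefficientwise" constraints in the target Rees algebra.
  have hmapK : J.map (reesAlgebraMap (B := B) I) ≤ coeffIdeal (B := B) I J := by
    rw [Ideal.map_le_iff_le_comap]
    intro j hj
    intro n
    have hcoeff : ((reesAlgebraMap (B := B) I j : reesAlgebra (I.map φ)) : B[X]).coeff n =
        φ ((j : A[X]).coeff n) := by
      simp [reesAlgebraMap, RingHom.codRestrict]; rfl
    rw [hcoeff]
    refine Ideal.mem_map_of_mem _ ?_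
    exact ⟨(mem_reesAlgebra_iff I (j : A[X])).1 j.2 n, hJ j hj n⟩
  apply le_antisymm
  · intro p hp
    rw [Ideal.mem_comap] at hp
    have hK := mem_coeffIdeal.1 (hmapK hp)
    have hcoeffs : ∀ n : ℕ, (p : A[X]).coeff n ∈ reesDeg I J n := by
      intro n
      have := hK n
      have hcoeff : ((reesAlgebraMap (B := B) I p : reesAlgebra (I.map φ)) : B[X]).coeff n =
          φ ((p : A[X]).coeff n) := by
        simp [reesAlgebraMap, RingHom.codRestrict]; rfl
      rw [hcoeff] at this
      exact pure_ideal_contraction hpure _ this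
    -- write `p` as the sum of its homogeneous components
    have hrep : p = ∑ n ∈ Finset.range ((p : A[X]).natDegree + 1),
        (⟨Polynomial.monomial n ((p : A[X]).coeff n),
          reesAlgebra.monomial_mem.2 ((mem_reesAlgebra_iff I (p : A[X])).1 p.2 n)⟩ :
            reesAlgebra I) := by
      apply Subtype.ext
      rw [AddSubmonoidClass.coe_finset_sum]
      exact (p : A[X]).as_sum_range
    rw [hrep]
    exact Ideal.sum_mem _ fun n _ => (hcoeffs n).2
  · exact Ideal.le_comap_map
end

section
/- Let R be a commutative ring and A a Noetherian commutative R-algebra. If the reduction A_red = A/nil(A) (the quotient of A by its nilradical) is a finitely generated R-algebra, then A is a finitely generated R-algebra. -/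
/-- Let `R` be a commutative ring and `A` a Noetherian commutative `R`-algebra. If the
reduction `A_red = A ⧸ nil(A)` is a finitely generated `R`-algebra, then so is `A`. -/
theorem finiteType_of_finiteType_quotient_nilradical {R A : Type u} [CommRing R] [CommRing A]
    [Algebra R A] [IsNoetherianRing A]
    (hred : Algebra.FiniteType R (A ⧸ nilradical A)) :
    Algebra.FiniteType R A := by
  classical
  set N : Ideal A := nilradical A with hN
  -- the nilradical is nilpotent
  obtain ⟨n, hn⟩ := IsNoetherianRing.isNilpotent_nilradical A
  -- generators of the quotient
  obtain ⟨s, hs⟩ := hred.out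
  -- generators of the nilradical
  obtain ⟨t, ht⟩ : N.FG := IsNoetherian.noetherian N
  -- lift the quotient generators
  have mksurj : Function.Surjective (Ideal.Quotient.mk N) := Ideal.Quotient.mk_surjective
  set f : A ⧸ N → A := Function.surjInv mksurj with hf
  set s' : Finset A := s.image f with hs'
  set B : Subalgebra R A := Algebra.adjoin R ((s' : Set A) ∪ (t : Set A)) with hB
  have htB : ∀ x ∈ t, x ∈ B := fun x hx =>
    Algebra.subset_adjoin (Set.mem_union_right _ hx)
  have htN : ∀ x ∈ t, x ∈ N := fun x hx => ht ▸ Ideal.subset_span hx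
  -- Step 1 : every element is congruent mod N to an element of B
  have step1 : ∀ a : A, ∃ b ∈ B, a - b ∈ N := by
    intro a
    have himg : (Ideal.Quotient.mkₐ R N) '' (s' : Set A) = (s : Set (A ⧸ N)) := by
      ext x
      simp only [hs', Finset.coe_image, Set.image_image]
      constructor
      · rintro ⟨y, hy, rfl⟩
        simpa [hf, Ideal.Quotient.mkₐ_eq_mk, Function.surjInv_eq mksurj] using hy
      · intro hx
        exact ⟨x, hx, by simp [hf, Ideal.Quotient.mkₐ_eq_mk, Function.surjInv_eq mksurj]⟩
    have hmem : Ideal.Quotient.mk N a ∈ B.map (Ideal.Quotient.mkₐ R N) := by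
      have h1 : Algebra.adjoin R ((s' : Set A)) ≤ B :=
        Algebra.adjoin_mono (Set.subset_union_left)
      have h2 : (Algebra.adjoin R ((s' : Set A))).map (Ideal.Quotient.mkₐ R N) ≤
          B.map (Ideal.Quotient.mkₐ R N) := Subalgebra.map_mono h1
      have h3 : (Algebra.adjoin R ((s' : Set A))).map (Ideal.Quotient.mkₐ R N) =
          Algebra.adjoin R ((Ideal.Quotient.mkₐ R N) '' (s' : Set A)) :=
        (Algebra.adjoin_image R (Ideal.Quotient.mkₐ R N) _).symm
      rw [h3, himg, hs] at h2
      exact h2 (by trivial)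
    obtain ⟨b, hb, hbeq⟩ := hmem
    refine ⟨b, hb, ?_⟩
    rw [← Ideal.Quotient.eq_zero_iff_mem, map_sub]
    exact sub_eq_zero_of_eq hbeq.symm
  -- Step 2 : elements of N^m are congruent mod N^(m+1) to elements of B
  have step2 : ∀ m : ℕ, ∀ x ∈ N ^ m, ∃ b ∈ B, x - b ∈ N ^ (m + 1) := by
    intro m
    induction m with
    | zero =>
      intro x _
      obtain ⟨b, hb, hxb⟩ := step1 x
      exact ⟨b, hb, by simpa using hxb⟩
    | succ m ih =>
      intro x hx
      rw [pow_succ] at hx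
      refine Submodule.mul_induction_on hx ?_ ?_
      · -- product case : y ∈ N^m, z ∈ N
        intro y hy z hz
        -- inner induction on z ∈ N = span t
        rw [← ht] at hz
        induction hz using Submodule.span_induction with
        | mem u hu =>
          obtain ⟨b, hb, hyb⟩ := ih y hy
          refine ⟨b * u, B.mul_mem hb (htB u hu), ?_⟩
          have : y * u - b * u = (y - b) * u := by ring
          rw [this, pow_succ]
          exact Ideal.mul_mem_mul hyb (htN u hu)
        | zero => exact ⟨0, B.zero_mem, by simp⟩
        | add u v hu hv ihu ihv =>
          obtain ⟨b, hb, hyb⟩ := ihu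
          obtain ⟨c, hc, hyc⟩ := ihv
          refine ⟨b + c, B.add_mem hb hc, ?_⟩
          have : y * (u + v) - (b + c) = (y * u - b) + (y * v - c) := by ring
          rw [this]
          exact Ideal.add_mem _ hyb hyc
        | smul a u hu ihu =>
          obtain ⟨b, hb, hyb⟩ := ihu
          obtain ⟨c, hc, hac⟩ := step1 a
          refine ⟨c * b, B.mul_mem hc hb, ?_⟩
          have huN : u ∈ N := ht ▸ hu
          have hyuN : y * u ∈ N ^ (m + 1) := by
            rw [pow_succ]
            exact Ideal.mul_mem_mul hy huN
          have key : y * (a • u) - c * b = c * (y * u - b) + (a - c) * (y * u) := by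
            simp only [smul_eq_mul]; ring
          rw [key]
          refine Ideal.add_mem _ (Ideal.mul_mem_left _ _ hyb) ?_
          rw [pow_succ, mul_comm (a - c)]
          exact Ideal.mul_mem_mul hyuN hac
      · -- additive case
        rintro x y ⟨b, hb, hxb⟩ ⟨c, hc, hyc⟩
        refine ⟨b + c, B.add_mem hb hc, ?_⟩
        have : x + y - (b + c) = (x - b) + (y - c) := by ring
        rw [this]
        exact Ideal.add_mem _ hxb hyc
  -- Step 3 : every element is congruent mod N^m to an element of B
  have step3 : ∀ m : ℕ, ∀ a : A, ∃ b ∈ B, a - b ∈ N ^ m := by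
    intro m
    induction m with
    | zero => intro a; exact ⟨0, B.zero_mem, by simp⟩
    | succ m ih =>
      intro a
      obtain ⟨b, hb, hab⟩ := ih a
      obtain ⟨c, hc, hbc⟩ := step2 m _ hab
      refine ⟨b + c, B.add_mem hb hc, ?_⟩
      have : a - (b + c) = a - b - c := by ring
      rw [this]
      exact hbc
  -- conclude : B = ⊤
  have hBtop : B = ⊤ := by
    rw [eq_top_iff]
    intro a _
    obtain ⟨b, hb, hab⟩ := step3 n a
    rw [hn] at hab
    have h0 : a - b = 0 := by simpa using hab
    have : a = b := sub_eq_zero.mp h0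
    rwa [this]
  exact ⟨⟨s' ∪ t, by rwa [Finset.coe_union]⟩⟩
end

section
/- Let R be a commutative ring and A a reduced Noetherian commutative R-algebra. If for every minimal prime ideal P of A the quotient A/P is a finitely generated R-algebra, then A is a finitely generated R-algebra. -/
universe u

/-- Key pair lemma. -/
theorem aux_pair {R A : Type u} [CommRing R] [CommRing A] [Algebra R A]
    (I J : Ideal A) (hIJ : I ⊓ J = ⊥) (hI : I.FG)
    (h1 : Algebra.FiniteType R (A ⧸ I)) (h2 : Algebra.FiniteType R (A ⧸ J)) :
    Algebra.FiniteType R A := by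
  obtain ⟨s1, hs1⟩ := h1.1
  obtain ⟨s2, hs2⟩ := h2.1
  obtain ⟨K, hK⟩ := hI
  classical
  -- lifts
  let f1 : A ⧸ I → A := Function.surjInv Ideal.Quotient.mk_surjective
  let f2 : A ⧸ J → A := Function.surjInv Ideal.Quotient.mk_surjective
  set S : Subalgebra R A :=
    Algebra.adjoin R ((s1.image f1 : Finset A) ∪ s2.image f2 ∪ K : Finset A) with hS
  have hmk1 : ∀ x, Ideal.Quotient.mk I (f1 x) = x := fun x =>
    Function.surjInv_eq Ideal.Quotient.mk_surjective x
  have hmk2 : ∀ x, Ideal.Quotient.mk J (f2 x) = x := fun x =>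
    Function.surjInv_eq Ideal.Quotient.mk_surjective x
  -- surjectivity onto A/I and A/J from S
  have hsur : ∀ (L : Ideal A) (f : A ⧸ L → A) (s : Finset (A ⧸ L)),
      (∀ x, Ideal.Quotient.mk L (f x) = x) → Algebra.adjoin R (s : Set (A ⧸ L)) = ⊤ →
      ↑(s.image f) ⊆ (S : Set A) → ∀ a : A, ∃ t ∈ S, a - t ∈ L := by
    intro L f s hf hadj hsub a
    have hST : Algebra.adjoin R (↑(s.image f) : Set A) ≤ S := Algebra.adjoin_le hsub
    have : Ideal.Quotient.mk L a ∈ Algebra.adjoin R (s : Set (A ⧸ L)) := by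
      rw [hadj]; trivial
    have hmaps : (Algebra.adjoin R (s : Set (A ⧸ L))) ≤
        (Algebra.adjoin R (↑(s.image f) : Set A)).map (Ideal.Quotient.mkₐ R L) := by
      rw [AlgHom.map_adjoin]
      apply Algebra.adjoin_mono
      intro x hx
      exact ⟨f x, Finset.mem_coe.2 (Finset.mem_image_of_mem f (Finset.mem_coe.1 hx)), hf x⟩
    obtain ⟨t, ht, hteq⟩ := hmaps this
    refine ⟨t, hST ht, ?_⟩
    rw [← Ideal.Quotient.eq]
    exact hteq.symm
  have hsub1 : ↑(s1.image f1) ⊆ (S : Set A) := fun x hx =>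
    Algebra.subset_adjoin (by simp only [Finset.coe_union]; left; left; exact hx)
  have hsub2 : ↑(s2.image f2) ⊆ (S : Set A) := fun x hx =>
    Algebra.subset_adjoin (by simp only [Finset.coe_union]; left; right; exact hx)
  have hsubK : (K : Set A) ⊆ (S : Set A) := fun x hx =>
    Algebra.subset_adjoin (by simp only [Finset.coe_union]; right; exact hx)
  have hsur1 : ∀ a : A, ∃ t ∈ S, a - t ∈ I := hsur I f1 s1 hmk1 hs1 hsub1
  have hsur2 : ∀ a : A, ∃ t ∈ S, a - t ∈ J := hsur J f2 s2 hmk2 hs2 hsub2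
  -- I ⊆ S
  have hIS : ∀ x ∈ I, x ∈ S := by
    intro x hx
    rw [← hK] at hx
    induction hx using Submodule.span_induction with
    | mem y hy => exact hsubK hy
    | zero => exact zero_mem S
    | add y z _ _ hy hz => exact add_mem hy hz
    | smul a y hy ihy =>
      obtain ⟨t, htS, htJ⟩ := hsur2 a
      have hyI : y ∈ I := hK ▸ hy
      have : (a - t) * y = 0 := by
        have : (a - t) * y ∈ I ⊓ J := ⟨I.mul_mem_left _ hyI, J.mul_mem_right _ htJ⟩
        rwa [hIJ, Ideal.mem_bot] at this
      have : a * y = t * y := by linear_combination this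
      rw [smul_eq_mul, this]
      exact mul_mem htS ihy
  refine ⟨⟨(s1.image f1) ∪ s2.image f2 ∪ K, ?_⟩⟩
  rw [← hS]
  rw [eq_top_iff]
  intro a _
  obtain ⟨t, htS, htI⟩ := hsur1 a
  have : a = t + (a - t) := by ring
  rw [this]
  exact add_mem htS (hIS _ htI)

theorem aux_inf {R A : Type u} [CommRing R] [CommRing A] [Algebra R A] [IsNoetherianRing A]
    (s : Finset (Ideal A)) (h : ∀ I ∈ s, Algebra.FiniteType R (A ⧸ I)) :
    Algebra.FiniteType R (A ⧸ (s.inf id)) := by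
  classical
  induction s using Finset.induction with
  | empty =>
    change Algebra.FiniteType R (A ⧸ (⊤ : Ideal A))
    have : Subsingleton (A ⧸ (⊤ : Ideal A)) := by
      constructor; intro a b
      obtain ⟨a, rfl⟩ := Ideal.Quotient.mk_surjective a
      obtain ⟨b, rfl⟩ := Ideal.Quotient.mk_surjective b
      rw [Ideal.Quotient.eq]; trivial
    refine ⟨⟨∅, eq_top_iff.2 ?_⟩⟩
    intro x _
    rw [Subsingleton.elim x 0]
    exact zero_mem _
  | insert I t hni ih =>
    have hK : Algebra.FiniteType R (A ⧸ (t.inf id)) := ih (fun J hJ => h J (Finset.mem_insert_of_mem hJ))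
    have hI : Algebra.FiniteType R (A ⧸ I) := h I (Finset.mem_insert_self I t)
    rw [Finset.inf_insert, id]
    set N : Ideal A := I ⊓ t.inf id with hN
    set Q := A ⧸ N
    -- images in Q
    have e1 : ((Q ⧸ (I.map (Ideal.Quotient.mkₐ R N))) ≃ₐ[R] A ⧸ I) := by
      have : N ⊔ I = I := sup_eq_right.2 inf_le_left
      exact (DoubleQuot.quotQuotEquivQuotSupₐ R N I).trans (Ideal.quotientEquivAlgOfEq R this)
    have e2 : ((Q ⧸ ((t.inf id).map (Ideal.Quotient.mkₐ R N))) ≃ₐ[R] A ⧸ (t.inf id)) := by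
      have : N ⊔ t.inf id = t.inf id := sup_eq_right.2 inf_le_right
      exact (DoubleQuot.quotQuotEquivQuotSupₐ R N (t.inf id)).trans (Ideal.quotientEquivAlgOfEq R this)
    have hinf : (I.map (Ideal.Quotient.mkₐ R N)) ⊓ ((t.inf id).map (Ideal.Quotient.mkₐ R N)) = ⊥ := by
      rw [eq_bot_iff]
      rintro x ⟨hx1, hx2⟩
      obtain ⟨a, rfl⟩ := Ideal.Quotient.mk_surjective x
      have hs : Function.Surjective (Ideal.Quotient.mkₐ R N) := Ideal.Quotient.mk_surjective
      have hc1 : a ∈ (I.map (Ideal.Quotient.mkₐ R N)).comap (Ideal.Quotient.mkₐ R N) := hx1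
      have hc2 : a ∈ ((t.inf id).map (Ideal.Quotient.mkₐ R N)).comap (Ideal.Quotient.mkₐ R N) := hx2
      rw [Ideal.comap_map_of_surjective _ hs] at hc1 hc2
      have hker : RingHom.ker (Ideal.Quotient.mkₐ R N) = N := by
        ext x; rw [RingHom.mem_ker]; exact Ideal.Quotient.eq_zero_iff_mem
      rw [← RingHom.ker_eq_comap_bot, hker] at hc1 hc2
      rw [sup_eq_left.2 (inf_le_left : N ≤ I)] at hc1
      rw [sup_eq_left.2 (inf_le_right : N ≤ t.inf id)] at hc2
      rw [Ideal.mem_bot, Ideal.Quotient.eq_zero_iff_mem]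
      exact ⟨hc1, hc2⟩
    have : IsNoetherianRing Q := inferInstance
    have hfg : (I.map (Ideal.Quotient.mkₐ R N)).FG := (isNoetherianRing_iff_ideal_fg Q).1 this _
    exact aux_pair _ _ hinf hfg (hI.equiv e1.symm) (hK.equiv e2.symm)

/-- Let `R` be a commutative ring and `A` a reduced Noetherian commutative `R`-algebra. If
`A ⧸ P` is a finitely generated `R`-algebra for every minimal prime `P` of `A`, then `A` is a
finitely generated `R`-algebra. -/
theorem finiteType_of_quotient_minimalPrimes {R A : Type u} [CommRing R] [CommRing A]
    [Algebra R A] [IsReduced A] [IsNoetherianRing A]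
    (h : ∀ P ∈ minimalPrimes A, Algebra.FiniteType R (A ⧸ P)) :
    Algebra.FiniteType R A := by
  classical
  have hfin : (minimalPrimes A).Finite := minimalPrimes.finite_of_isNoetherianRing A
  set s : Finset (Ideal A) := hfin.toFinset with hs
  have h' : ∀ I ∈ s, Algebra.FiniteType R (A ⧸ I) := by
    intro I hI
    exact h I (hfin.mem_toFinset.1 hI)
  have := aux_inf (R := R) s h'
  have hbot : s.inf id = ⊥ := by
    rw [Finset.inf_id_eq_sInf, hfin.coe_toFinset]
    have h1 : minimalPrimes A = (⊥ : Ideal A).minimalPrimes := rfl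
    rw [h1, Ideal.sInf_minimalPrimes]
    have h2 : (⊥ : Ideal A).radical = nilradical A := rfl
    rw [h2, nilradical_eq_zero]
    exact Submodule.zero_eq_bot
  rw [hbot] at this
  exact this.equiv (AlgEquiv.ofRingEquiv (f := RingEquiv.quotientBot A) (fun _ => rfl))
end
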